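/- Let p : E → B be a fibration of essentially finite groupoids, A an object of E, B = p(A). Then |Aut_E(A)| = |Aut_{Fib(p,B)}(A)| · |Aut_B(B)| / |Aut_B(B) ▷ [A]|, where Aut_B(B) ▷ [A] denotes the orbit of the class of A in π₀(Fib(p,B)) under the lifting action of Aut_B(B). -/

import Mathlib

open CategoryTheory

universe u u'

variable {E : Type u} [Groupoid E] {B : Type u'} [Groupoid B]

/-- A fibration of groupoids: every morphism of the base with target `p.obj e`
lifts to a morphism of the total groupoid with target `e`. -/
def IsGrpdFibration (p : E ⥤ B) : Prop :=
  ∀ (e : E) (b' : B) (h : b' ⟶ p.obj e),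
    ∃ (e' : E) (g : e' ⟶ e) (he : p.obj e' = b'), p.map g = eqToHom he ≫ h

/-- The fibre of a functor of groupoids at an object of the base. -/
structure Fib (p : E ⥤ B) (b : B) where
  pt : E
  over_eq : p.obj pt = b

/-- The fibre is a groupoid: morphisms are the morphisms of `E` mapping to the identity. -/
instance fibGroupoid (p : E ⥤ B) (b : B) : Groupoid (Fib p b) where
  Hom a a' := {f : a.pt ⟶ a'.pt // p.map f = eqToHom (a.over_eq.trans a'.over_eq.symm)}
  id a := ⟨𝟙 a.pt, by simp⟩
  comp f g := ⟨f.1 ≫ g.1, by rw [Functor.map_comp, f.2, g.2, eqToHom_trans]⟩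
  id_comp f := Subtype.ext (Category.id_comp f.1)
  comp_id f := Subtype.ext (Category.comp_id f.1)
  assoc f g h := Subtype.ext (Category.assoc f.1 g.1 h.1)
  inv f := ⟨Groupoid.inv f.1, by
    rw [Groupoid.inv_eq_inv, Functor.map_inv]
    exact IsIso.inv_eq_of_hom_inv_id (by rw [f.2, eqToHom_trans, eqToHom_refl])⟩
  inv_comp f := Subtype.ext (Groupoid.inv_comp f.1)
  comp_inv f := Subtype.ext (Groupoid.comp_inv f.1)

/-- A groupoid is essentially finite if it is equivalent to a finite groupoid; equivalently,
it has finitely many isomorphism classes of objects and all Hom-sets are finite. -/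
def EssentiallyFinite (C : Type*) [Category C] : Prop :=
  Finite (Quotient (isIsomorphicSetoid C)) ∧ ∀ X Y : C, Finite (X ⟶ Y)

/-! The group hom `p_* : Aut_E(A) → Aut_B(B)` has kernel `Aut_{Fib(p,B)}(A)` and, since `p` lifts
morphisms, image the stabiliser of `[A]` under the lifting action. Hence
`|Aut_E(A)| = |ker p_*| * |im p_*|`, and orbit–stabiliser gives `|im p_*| = |Aut_B(B)| / |Aut_B(B) ▷ [A]|`. -/

theorem MonoidHom.card_eq_card_ker_mul_card_div_card_orbit {G H α : Type*} [Group G] [Group H]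
    [Finite H] [MulAction H α] (φ : G →* H) {a : α}
    (hφ : φ.range = MulAction.stabilizer H a) :
    Nat.card G = Nat.card φ.ker * Nat.card H / Nat.card (MulAction.orbit H a) := by
  have horbit : Nat.card (MulAction.orbit H a) = (MulAction.stabilizer H a).index := by
    rw [MulAction.index_stabilizer, Nat.card_coe_set_eq]
  rw [horbit, ← (MulAction.stabilizer H a).card_mul_index, ← mul_assoc,
    Nat.mul_div_cancel _ (Nat.pos_of_ne_zero Subgroup.index_ne_zero_of_finite),
    ← hφ, ← Subgroup.index_ker φ, Subgroup.card_mul_index]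

@[simp]
theorem CategoryTheory.Functor.mapAut_hom {C D : Type*} [Category C] [Category D] (F : C ⥤ D) {X : C}
    (f : Aut X) : (F.mapAut X f).hom = F.map f.hom :=
  rfl

namespace Fib

def autMulEquivKerMapAut (p : E ⥤ B) (A : E) :
    Aut (Fib.mk A rfl : Fib p (p.obj A)) ≃* (p.mapAut A).ker where
  toFun u := ⟨⟨u.hom.1, u.inv.1, congrArg Subtype.val u.hom_inv_id,
    congrArg Subtype.val u.inv_hom_id⟩, Iso.ext u.hom.2⟩
  invFun f := ⟨⟨f.1.hom, congrArg Iso.hom f.2⟩,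
    ⟨f.1.inv, congrArg Iso.inv f.2⟩,
    Subtype.ext f.1.hom_inv_id, Subtype.ext f.1.inv_hom_id⟩
  left_inv _ := rfl
  right_inv _ := rfl
  map_mul' _ _ := rfl

def IsLiftingAction (p : E ⥤ B) (b : B)
    [MulAction (Aut b) (Quotient (isIsomorphicSetoid (Fib p b)))] : Prop :=
  ∀ (g : Aut b) (X Xg : Fib p b) (glift : Xg.pt ⟶ X.pt),
    p.map glift = eqToHom Xg.over_eq ≫ g.hom ≫ eqToHom X.over_eq.symm →
    g • Quotient.mk (isIsomorphicSetoid (Fib p b)) X = Quotient.mk _ Xg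

theorem exists_lift_aut {p : E ⥤ B} (hp : IsGrpdFibration p) {b : B} (g : Aut b)
    (X : Fib p b) : ∃ (Xg : Fib p b) (glift : Xg.pt ⟶ X.pt),
      p.map glift = eqToHom Xg.over_eq ≫ g.hom ≫ eqToHom X.over_eq.symm := by
  obtain ⟨e, glift, he, hglift⟩ := hp X.pt b (g.hom ≫ eqToHom X.over_eq.symm)
  exact ⟨⟨e, he⟩, glift, hglift⟩

variable {p : E ⥤ B} {A : E}
  [MulAction (Aut (p.obj A)) (Quotient (isIsomorphicSetoid (Fib p (p.obj A))))]

theorem mapAut_mem_stabilizer (hact : IsLiftingAction p (p.obj A)) (f : Aut A) :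
    p.mapAut A f ∈ MulAction.stabilizer (Aut (p.obj A))
      (Quotient.mk (isIsomorphicSetoid (Fib p (p.obj A))) (Fib.mk A rfl)) :=
  hact _ _ _ f.hom (by simp)

theorem mem_range_mapAut_of_mem_stabilizer (hp : IsGrpdFibration p)
    (hact : IsLiftingAction p (p.obj A)) {g : Aut (p.obj A)}
    (hg : g ∈ MulAction.stabilizer (Aut (p.obj A))
      (Quotient.mk (isIsomorphicSetoid (Fib p (p.obj A))) (Fib.mk A rfl))) :
    g ∈ (p.mapAut A).range := by
  obtain ⟨Xg, glift, hglift⟩ := exists_lift_aut hp g (Fib.mk A rfl)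
  obtain ⟨u⟩ : Nonempty (Xg ≅ Fib.mk A rfl) :=
    Quotient.exact ((hact g _ Xg glift hglift).symm.trans hg)
  refine ⟨asIso (u.inv.1 ≫ glift), Iso.ext ?_⟩
  change p.map (u.inv.1 ≫ glift) = g.hom
  rw [Functor.map_comp, u.inv.2, hglift]
  simp

theorem range_mapAut_eq_stabilizer (hp : IsGrpdFibration p) (hact : IsLiftingAction p (p.obj A)) :
    (p.mapAut A).range = MulAction.stabilizer (Aut (p.obj A))
      (Quotient.mk (isIsomorphicSetoid (Fib p (p.obj A))) (Fib.mk A rfl)) := by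
  ext g
  exact ⟨fun ⟨f, hf⟩ => hf ▸ mapAut_mem_stabilizer hact f,
    mem_range_mapAut_of_mem_stabilizer hp hact⟩

end Fib

theorem card_aut_fibration_general (p : E ⥤ B) (hp : IsGrpdFibration p)
    (hB : EssentiallyFinite B) (A : E)
    (act : MulAction (Aut (p.obj A)) (Quotient (isIsomorphicSetoid (Fib p (p.obj A)))))
    (hact : ∀ (g : Aut (p.obj A)) (X Xg : Fib p (p.obj A)) (glift : Xg.pt ⟶ X.pt),
        p.map glift = eqToHom Xg.over_eq ≫ g.hom ≫ eqToHom X.over_eq.symm →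
        act.smul g (Quotient.mk (isIsomorphicSetoid (Fib p (p.obj A))) X)
          = Quotient.mk (isIsomorphicSetoid (Fib p (p.obj A))) Xg) :
    Nat.card (Aut A)
      = Nat.card (Aut (Fib.mk A rfl : Fib p (p.obj A))) * Nat.card (Aut (p.obj A))
        / Nat.card ↥{x : Quotient (isIsomorphicSetoid (Fib p (p.obj A))) |
            ∃ g : Aut (p.obj A),
              act.smul g (Quotient.mk (isIsomorphicSetoid (Fib p (p.obj A))) (Fib.mk A rfl)) = x} := by
  let := act
  have := hB.2 (p.obj A) (p.obj A)
  have : Finite (Aut (p.obj A)) := Finite.of_injective Iso.hom fun _ _ h => Iso.ext h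
  rw [Nat.card_congr (Fib.autMulEquivKerMapAut p A).toEquiv]
  exact (p.mapAut A).card_eq_card_ker_mul_card_div_card_orbit
    (Fib.range_mapAut_eq_stabilizer hp hact)

/-- For a fibration of essentially finite groupoids `p : E → B` and an object `A` over
`B = p(A)`, one has `|Aut_E(A)| = |Aut_{Fib(p,B)}(A)| * |Aut_B(B)| / |Aut_B(B) ▷ [A]|`,
where the denominator is the cardinality of the orbit of the class of `A` in
`π₀(Fib(p,B))` under the lifting action of `Aut_B(B)`. -/
theorem card_aut_fibration (p : E ⥤ B) (hp : IsGrpdFibration p)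
    (hE : EssentiallyFinite E) (hB : EssentiallyFinite B) (A : E)
    (act : MulAction (Aut (p.obj A)) (Quotient (isIsomorphicSetoid (Fib p (p.obj A)))))
    (hact : ∀ (g : Aut (p.obj A)) (X Xg : Fib p (p.obj A)) (glift : Xg.pt ⟶ X.pt),
        p.map glift = eqToHom Xg.over_eq ≫ g.hom ≫ eqToHom X.over_eq.symm →
        act.smul g (Quotient.mk (isIsomorphicSetoid (Fib p (p.obj A))) X)
          = Quotient.mk (isIsomorphicSetoid (Fib p (p.obj A))) Xg) :
    Nat.card (Aut A)
      = Nat.card (Aut (Fib.mk A rfl : Fib p (p.obj A))) * Nat.card (Aut (p.obj A))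
        / Nat.card ↥{x : Quotient (isIsomorphicSetoid (Fib p (p.obj A))) |
            ∃ g : Aut (p.obj A),
              act.smul g (Quotient.mk (isIsomorphicSetoid (Fib p (p.obj A))) (Fib.mk A rfl)) = x} :=
  card_aut_fibration_general p hp hB A act hact
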